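/- arXiv:math/9503231 — 3 statements merged into one kernel-verified Lean document; each statement's English description precedes it below -/
import Mathlib

section
/- Let q = 2^(2n+1), θ = 2^(n+1), and S = {M(a,b) : a, b ∈ F_q} where M(a,b) is the 3×3 matrix with rows (1,0,0), (a^θ,1,0), (b,a,1). If x ∈ S satisfies x² = 1 and x ≠ 1, then x = M(0,b) for some nonzero b; in particular every involution of S lies in the center {M(0,b) : b ∈ F_q}. -/
/-- The matrix `M(a,b)` generating the Sylow 2-subgroup of the Suzuki group
`Sz(2^(2n+1))`. -/
noncomputable def SzM (n : ℕ) (a b : GaloisField 2 (2 * n + 1)) :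
    Matrix (Fin 3) (Fin 3) (GaloisField 2 (2 * n + 1)) :=
  !![1, 0, 0; a ^ (2 ^ (n + 1)), 1, 0; b, a, 1]

/-- The Sylow 2-subgroup of `Sz(2^(2n+1))` as a set of matrices. -/
noncomputable def SzSyl (n : ℕ) : Set (Matrix (Fin 3) (Fin 3) (GaloisField 2 (2 * n + 1))) :=
  {x | ∃ a b, x = SzM n a b}

/-! The square of `M(a,b)` is the central element `M(0, a^(1+θ))`, and `a ↦ a^(1+θ)` has trivial
kernel, so `M(a,b)² = 1` forces `a = 0`. -/

theorem SzM_inj {n : ℕ} {a b a' b' : GaloisField 2 (2 * n + 1)} :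
    SzM n a b = SzM n a' b' ↔ a = a' ∧ b = b' := by
  refine ⟨fun h => ⟨?_, ?_⟩, fun ⟨ha, hb⟩ => ha ▸ hb ▸ rfl⟩
  · simpa [SzM] using congrFun (congrFun h 2) 1
  · simpa [SzM] using congrFun (congrFun h 2) 0

theorem SzM_zero_zero (n : ℕ) : SzM n 0 0 = 1 := by
  simp [SzM, ← Matrix.one_fin_three]

theorem SzM_sq (n : ℕ) (a b : GaloisField 2 (2 * n + 1)) :
    SzM n a b ^ 2 = SzM n 0 (a * a ^ 2 ^ (n + 1)) := by
  ext i j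
  fin_cases i <;> fin_cases j <;>
    simp [SzM, sq, Matrix.mul_apply, Fin.sum_univ_three] <;>
    ring_nf <;> simp [CharTwo.two_eq_zero]

theorem SzSyl_involutions_central (n : ℕ)
    (x : Matrix (Fin 3) (Fin 3) (GaloisField 2 (2 * n + 1)))
    (hx : x ∈ SzSyl n) (hsq : x ^ 2 = 1) (hne : x ≠ 1) :
    ∃ b : GaloisField 2 (2 * n + 1), b ≠ 0 ∧ x = SzM n 0 b := by
  obtain ⟨a, b, rfl⟩ := hx
  rw [SzM_sq, ← SzM_zero_zero, SzM_inj, ← pow_succ'] at hsq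
  obtain rfl : a = 0 := pow_eq_zero_iff (Nat.succ_ne_zero _) |>.mp hsq.2
  refine ⟨b, ?_, rfl⟩
  rintro rfl
  exact hne (SzM_zero_zero n)
end

section
/- Let ρ ∈ F_(2^(2n)) have multiplicative order exactly 2^n + 1 and set λ = ρ + ρ^(2^n). If l divides n and λ ∈ F_(2^l), then l = n. Consequently {1, λ, λ², ..., λ^(n-1)} is a basis of F_(2^n) over F_2. -/
/-! Since `ρ ^ (2 ^ n + 1) = 1` we have `ρ ^ 2 ^ n = ρ⁻¹`, so `λ = ρ + ρ⁻¹` and `ρ, ρ⁻¹` are the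
roots of `Y² + λY + 1`. If `x ↦ x ^ 2 ^ l` fixes `λ` it permutes these roots, so
`ρ ^ (2 ^ l - 1) = 1` or `ρ ^ (2 ^ l + 1) = 1`, and the order `2 ^ n + 1` of `ρ` forces `l = n`.
The degree `d` of the minimal polynomial of `λ` over `𝔽₂` divides exactly those `l` with
`λ ^ 2 ^ l = λ`; as `λ ^ 2 ^ n = λ`, this gives `d ∣ n` and then `d = n`, hence the independence. Finally, `n` independent elements fixed by
`x ↦ x ^ 2 ^ n` already make up `2 ^ n` roots of `X ^ 2 ^ n - X`, hence all of them. -/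

open Polynomial

section AddInv

variable {K : Type*} [Field K]

theorem eq_or_eq_inv_of_add_inv_eq_add_inv {x y : K} (hx : x ≠ 0) (hy : y ≠ 0)
    (h : x + x⁻¹ = y + y⁻¹) : y = x ∨ y = x⁻¹ := by
  have hxx := mul_inv_cancel₀ hx
  have hyy := mul_inv_cancel₀ hy
  have : (y - x) * (y - x⁻¹) = 0 := by linear_combination (-y) * h + hxx - hyy
  simpa [sub_eq_zero] using this

theorem pow_eq_inv_of_orderOf_eq_add_one {x : K} {m : ℕ} (hx : orderOf x = m + 1) :
    x ^ m = x⁻¹ :=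
  eq_inv_of_mul_eq_one_left (by rw [← pow_succ, ← hx, pow_orderOf_eq_one])

variable {p : ℕ} [ExpChar K p]

theorem add_inv_pow_expChar_pow (x : K) (k : ℕ) :
    (x + x⁻¹) ^ p ^ k = x ^ p ^ k + (x ^ p ^ k)⁻¹ := by
  rw [add_pow_expChar_pow, inv_pow]

theorem add_inv_pow_expChar_pow_eq_self {x : K} {n : ℕ} (hx : orderOf x = p ^ n + 1) :
    (x + x⁻¹) ^ p ^ n = x + x⁻¹ := by
  rw [add_inv_pow_expChar_pow, pow_eq_inv_of_orderOf_eq_add_one hx, inv_inv, add_comm]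

theorem pow_expChar_pow_eq_self_or_inv {x : K} (hx : x ≠ 0) {k : ℕ}
    (h : (x + x⁻¹) ^ p ^ k = x + x⁻¹) : x ^ p ^ k = x ∨ x ^ p ^ k = x⁻¹ :=
  eq_or_eq_inv_of_add_inv_eq_add_inv hx (pow_ne_zero _ hx) (by rw [← h, add_inv_pow_expChar_pow])

end AddInv

theorem eq_of_add_inv_pow_char_pow_eq {K : Type*} [Field K] {p : ℕ} [Fact p.Prime] [CharP K p]
    {ρ : K} {n l : ℕ} (hρ : orderOf ρ = p ^ n + 1) (hl : 0 < l) (hln : l ≤ n)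
    (hfix : (ρ + ρ⁻¹) ^ p ^ l = ρ + ρ⁻¹) : l = n := by
  have hp : 1 < p := (Fact.out : p.Prime).one_lt
  have hρ0 : ρ ≠ 0 := by rintro rfl; simp at hρ
  have hpow : p ^ l ≤ p ^ n := Nat.pow_le_pow_right (by omega) hln
  rcases pow_expChar_pow_eq_self_or_inv hρ0 hfix with h | h
  · have h1 : ρ ^ (p ^ l - 1) = 1 :=
      mul_right_cancel₀ hρ0 (by rw [pow_sub_one_mul (by positivity), h, one_mul])
    have := Nat.le_of_dvd (Nat.sub_pos_of_lt (Nat.one_lt_pow hl.ne' hp))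
      (hρ ▸ orderOf_dvd_of_pow_eq_one h1)
    omega
  · have h1 : ρ ^ (p ^ l + 1) = 1 := by rw [pow_succ, h, inv_mul_cancel₀ hρ0]
    have := Nat.le_of_dvd (by positivity) (hρ ▸ orderOf_dvd_of_pow_eq_one h1)
    exact le_antisymm hln ((Nat.pow_le_pow_iff_right hp).1 (by omega))

theorem minpoly.natDegree_dvd_iff_pow_card_pow_eq_self {k L : Type*} [Field k] [Finite k]
    [Field L] [Algebra k L] {x : L} (hx : IsIntegral k x) {m : ℕ} :
    (minpoly k x).natDegree ∣ m ↔ x ^ Nat.card k ^ m = x := by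
  rw [(minpoly.irreducible hx).natDegree_dvd_iff_dvd_X_pow_card_pow_sub_X, minpoly.dvd_iff,
    map_sub, map_pow, aeval_X, sub_eq_zero]

theorem Polynomial.mem_of_forall_isRoot_of_natDegree_le_ncard {R : Type*} [CommRing R]
    [IsDomain R] {f : R[X]} (hf : f ≠ 0) {s : Set R} (hs : ∀ y ∈ s, f.IsRoot y)
    (hcard : f.natDegree ≤ s.ncard) {x : R} (hx : f.IsRoot x) : x ∈ s := by
  classical
  have hsub : s ⊆ f.roots.toFinset := fun y hy => by simpa [hf] using hs y hy
  have hle : (f.roots.toFinset : Set R).ncard ≤ s.ncard := by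
    rw [Set.ncard_coe_finset]
    exact (Multiset.toFinset_card_le _).trans ((card_roots' f).trans hcard)
  rw [Set.eq_of_subset_of_ncard_le hsub hle (Finset.finite_toSet _)]
  simpa [hf] using hx

section ZModAlgebra

variable {L : Type*} [Field L] {p : ℕ} [Fact p.Prime] [Algebra (ZMod p) L] [CharP L p]

theorem natDegree_minpoly_add_inv_eq {ρ : L} {n : ℕ} (hn : n ≠ 0)
    (hρ : orderOf ρ = p ^ n + 1) : (minpoly (ZMod p) (ρ + ρ⁻¹)).natDegree = n := by
  have hρint : IsIntegral (ZMod p) ρ :=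
    .of_pow (by omega : 0 < orderOf ρ) (by rw [pow_orderOf_eq_one]; exact isIntegral_one)
  have hint : IsIntegral (ZMod p) (ρ + ρ⁻¹) := by
    rw [← pow_eq_inv_of_orderOf_eq_add_one hρ]
    exact hρint.add (hρint.pow _)
  have hdvd (m : ℕ) := minpoly.natDegree_dvd_iff_pow_card_pow_eq_self hint (m := m)
  simp only [Nat.card_zmod] at hdvd
  exact (eq_of_add_inv_pow_char_pow_eq hρ (minpoly.natDegree_pos hint)
    (Nat.le_of_dvd (Nat.pos_of_ne_zero hn) ((hdvd n).2 (add_inv_pow_expChar_pow_eq_self hρ)))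
    ((hdvd _).1 dvd_rfl))

theorem linearIndependent_add_inv_pow {ρ : L} {n : ℕ} (hn : n ≠ 0)
    (hρ : orderOf ρ = p ^ n + 1) :
    LinearIndependent (ZMod p) fun i : Fin n => (ρ + ρ⁻¹) ^ (i : ℕ) := by
  have := linearIndependent_pow (K := ZMod p) (ρ + ρ⁻¹)
  rwa [natDegree_minpoly_add_inv_eq hn hρ] at this

theorem pow_char_pow_eq_self_of_mem_span {n : ℕ} {s : Set L} (hs : ∀ y ∈ s, y ^ p ^ n = y)
    {x : L} (hx : x ∈ Submodule.span (ZMod p) s) : x ^ p ^ n = x := by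
  induction hx using Submodule.span_induction with
  | mem y hy => exact hs y hy
  | zero => exact zero_pow (pow_ne_zero n (Fact.out : p.Prime).ne_zero)
  | add y z _ _ hy hz => rw [add_pow_char_pow, hy, hz]
  | smul c y _ hy => rw [_root_.smul_pow, hy, ZMod.pow_card_pow]

theorem mem_span_of_pow_char_pow_eq_self {n : ℕ} (hn : n ≠ 0) {v : Fin n → L}
    (hv : LinearIndependent (ZMod p) v) (hfix : ∀ i, v i ^ p ^ n = v i) {x : L}
    (hx : x ^ p ^ n = x) : x ∈ Submodule.span (ZMod p) (Set.range v) := by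
  have hp : 1 < p := (Fact.out : p.Prime).one_lt
  have := Module.Finite.span_of_finite (ZMod p) (Set.finite_range v)
  have hcard : (Submodule.span (ZMod p) (Set.range v) : Set L).ncard = p ^ n := by
    rw [← Nat.card_coe_set_eq, SetLike.coe_sort_coe, Module.natCard_eq_pow_finrank (K := ZMod p),
      Nat.card_zmod, finrank_span_eq_card hv, Fintype.card_fin]
  refine mem_of_forall_isRoot_of_natDegree_le_ncard
    (FiniteField.X_pow_card_pow_sub_X_ne_zero L hn hp) (fun y hy => ?_)
    (by rw [FiniteField.X_pow_card_pow_sub_X_natDegree_eq L hn hp, hcard]) (by simp [hx])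
  simp [pow_char_pow_eq_self_of_mem_span (by simpa using hfix) hy]

end ZModAlgebra

theorem lambda_generates (n : ℕ) (hn : 1 ≤ n)
    (ρ : GaloisField 2 (2 * n)) (hρ : orderOf ρ = 2 ^ n + 1) :
    (∀ l : ℕ, 0 < l → l ∣ n →
        (ρ + ρ ^ (2 ^ n)) ^ (2 ^ l) = ρ + ρ ^ (2 ^ n) → l = n) ∧
    LinearIndependent (ZMod 2) (fun i : Fin n => (ρ + ρ ^ (2 ^ n)) ^ (i : ℕ)) ∧
    (∀ x : GaloisField 2 (2 * n), x ^ (2 ^ n) = x →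
        x ∈ Submodule.span (ZMod 2)
          (Set.range fun i : Fin n => (ρ + ρ ^ (2 ^ n)) ^ (i : ℕ))) := by
  rw [pow_eq_inv_of_orderOf_eq_add_one hρ]
  have hind := linearIndependent_add_inv_pow (by omega) hρ
  refine ⟨fun l hl hln => eq_of_add_inv_pow_char_pow_eq hρ hl (Nat.le_of_dvd hn hln), hind,
    fun x hx => mem_span_of_pow_char_pow_eq_self (by omega) hind (fun i => ?_) hx⟩
  rw [pow_right_comm, add_inv_pow_expChar_pow_eq_self hρ]
end

section
/- Let G be a finite group whose order is even, and suppose a Sylow 2-subgroup of G is cyclic and nontrivial. Then G has a normal subgroup of index 2^k where 2^k is the order of the Sylow 2-subgroup; in particular, if |G| > 2 then G is not simple. -/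
/-! Since 2 is the smallest prime dividing `|G|` and `Aut` of a cyclic 2-group is a 2-group, a
cyclic Sylow 2-subgroup is central in its normalizer, so Burnside's transfer theorem gives it a
normal complement. In a simple group that complement is trivial, so `G` is a simple 2-group and
has order 2. -/

open Subgroup

theorem IsPGroup.card_eq_of_isSimpleGroup {G : Type*} [Group G] [Finite G] [IsSimpleGroup G]
    {p : ℕ} [Fact p.Prime] (hG : IsPGroup p G) : Nat.card G = p := by
  have := hG.isNilpotent
  have hprime : (Nat.card G).Prime := IsSimpleGroup.prime_card
  have hdvd : p ∣ Nat.card G := hG.card_eq_or_dvd.resolve_left hprime.one_lt.ne'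
  exact ((Nat.prime_dvd_prime_iff_eq Fact.out hprime).mp hdvd).symm

theorem Sylow.card_eq_of_isSimpleGroup_of_isComplement' {G : Type*} [Group G] [Finite G]
    [IsSimpleGroup G] {p : ℕ} [Fact p.Prime] (P : Sylow p G) (hdvd : p ∣ Nat.card G)
    {K : Subgroup G} (hK : K.Normal) (hKP : K.IsComplement' P) : Nat.card G = p := by
  rcases hK.eq_bot_or_eq_top with rfl | rfl
  · rw [isComplement'_bot_left] at hKP
    exact (P.2.of_equiv ((MulEquiv.subgroupCongr hKP).trans topEquiv)).card_eq_of_isSimpleGroup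
  · rw [isComplement'_top_left] at hKP
    exact absurd hKP (P.ne_bot_of_dvd_card hdvd)

theorem cyclic_sylow_two_normal_complement_general (G : Type*) [Group G] [Finite G]
    (hEven : Even (Nat.card G)) (P : Sylow 2 G)
    (hcyc : IsCyclic P) :
    (∃ N : Subgroup G, N.Normal ∧ N.index = Nat.card P) ∧
    (2 < Nat.card G → ¬ IsSimpleGroup G) := by
  have htwo_dvd : 2 ∣ Nat.card G := even_iff_two_dvd.mp hEven
  obtain ⟨K, hK, hKP⟩ : ∃ K : Subgroup G, K.Normal ∧ K.IsComplement' P :=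
    ⟨_, MonoidHom.normal_ker _, hcyc.isComplement' ((Nat.minFac_eq_two_iff _).mpr htwo_dvd)⟩
  refine ⟨⟨K, hK, hKP.symm.index_eq_card⟩, fun hlt _ => ?_⟩
  exact hlt.ne' (P.card_eq_of_isSimpleGroup_of_isComplement' htwo_dvd hK hKP)

theorem cyclic_sylow_two_normal_complement (G : Type*) [Group G] [Finite G]
    (hEven : Even (Nat.card G)) (P : Sylow 2 G)
    (hcyc : IsCyclic P) (hnt : (P : Subgroup G) ≠ ⊥) :
    (∃ N : Subgroup G, N.Normal ∧ N.index = Nat.card P) ∧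
    (2 < Nat.card G → ¬ IsSimpleGroup G) :=
  cyclic_sylow_two_normal_complement_general G hEven P hcyc
end
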